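/- Let G be a finite group, H a subgroup, and x ∈ G. Then |G·x ∩ H| = (|G·x| / [G : N_G(H)]) · f(x), where G·x is the conjugacy class of x in G and f(x) is the number of G-conjugates of H containing x. -/

import Mathlib

open Pointwise MulAction

section Aux

variable {G : Type*} [Group G]

private lemma map_conj_eq_iff (H : Subgroup G) (a : G) :
    Subgroup.map (MulAut.conj a).toMonoidHom H = H ↔ a ∈ Subgroup.normalizer (H : Set G) := by
  simp only [SetLike.ext_iff, Subgroup.mem_map_equiv, MulAut.conj_symm_apply,
    Subgroup.mem_normalizer_iff'']
  exact forall_congr' fun h => Iff.comm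

private lemma toConjAct_smul_eq (H : Subgroup G) (g : G) :
    ConjAct.toConjAct g • H = Subgroup.map (MulAut.conj g).toMonoidHom H := by
  ext y
  rw [Subgroup.mem_smul_pointwise_iff_exists]
  simp [ConjAct.smul_def, Subgroup.mem_map, MulAut.conj_apply]

private lemma conj_comp (c g : G) :
    (MulAut.conj c).toMonoidHom.comp (MulAut.conj g).toMonoidHom
      = (MulAut.conj (c * g)).toMonoidHom := by
  ext z
  simp [mul_assoc]

private lemma card_conjugates (H : Subgroup G) :
    Nat.card {K : Subgroup G // ∃ g : G, K = Subgroup.map (MulAut.conj g).toMonoidHom H}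
      = (Subgroup.normalizer (H : Set G)).index := by
  have horb : {K : Subgroup G | ∃ g : G, K = Subgroup.map (MulAut.conj g).toMonoidHom H}
      = orbit (ConjAct G) H := by
    ext K
    simp only [Set.mem_setOf_eq, MulAction.mem_orbit_iff]
    constructor
    · rintro ⟨g, rfl⟩
      exact ⟨ConjAct.toConjAct g, (toConjAct_smul_eq H g)⟩
    · rintro ⟨g, rfl⟩
      refine ⟨ConjAct.ofConjAct g, ?_⟩
      rw [← toConjAct_smul_eq, ConjAct.toConjAct_ofConjAct]
  have hst : stabilizer (ConjAct G) H
      = (Subgroup.normalizer (H : Set G)).comap (ConjAct.ofConjAct : ConjAct G ≃* G).toMonoidHom := by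
    ext g
    rw [MulAction.mem_stabilizer_iff, Subgroup.mem_comap]
    conv_lhs => rw [show g = ConjAct.toConjAct (ConjAct.ofConjAct g) from
      (ConjAct.toConjAct_ofConjAct g).symm]
    rw [toConjAct_smul_eq, map_conj_eq_iff]
    rfl
  have hos := MulAction.index_stabilizer (ConjAct G) H
  rw [hst, Subgroup.index_comap_of_surjective _ (MulEquiv.surjective _)] at hos
  calc Nat.card {K : Subgroup G // ∃ g : G, K = Subgroup.map (MulAut.conj g).toMonoidHom H}
      = ({K : Subgroup G | ∃ g : G, K = Subgroup.map (MulAut.conj g).toMonoidHom H}).ncard :=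
        Nat.card_coe_set_eq _
    _ = (orbit (ConjAct G) H).ncard := by rw [horb]
    _ = (Subgroup.normalizer (H : Set G)).index := hos.symm

/-- Conjugating elements by `g` gives a bijection between the conjugacy-class part lying in
`gHg⁻¹` and the part lying in `H`. -/
private noncomputable def fiberEquivA (H : Subgroup G) (x g : G) :
    {y : G // IsConj x y ∧ y ∈ H}
      ≃ {y : G // IsConj x y ∧ y ∈ Subgroup.map (MulAut.conj g).toMonoidHom H} :=
  (MulAut.conj g).toEquiv.subtypeEquiv fun y => by
    simp only [MulEquiv.toEquiv_eq_coe, EquivLike.coe_coe, Subgroup.mem_map_equiv,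
      MulEquiv.symm_apply_apply]
    refine and_congr_left fun _ => ?_
    constructor
    · intro h; exact h.trans (isConj_iff.mpr ⟨g, rfl⟩)
    · intro h; exact h.trans (isConj_iff.mpr ⟨g, rfl⟩).symm

/-- Conjugating subgroups by `c` (with `c * x * c⁻¹ = y`) gives a bijection between conjugates
of `H` containing `x` and those containing `y`. -/
private noncomputable def fiberEquivB (H : Subgroup G) (x y c : G) (hc : c * x * c⁻¹ = y) :
    {K : Subgroup G // (∃ g : G, K = Subgroup.map (MulAut.conj g).toMonoidHom H) ∧ x ∈ K}
      ≃ {K : Subgroup G // (∃ g : G, K = Subgroup.map (MulAut.conj g).toMonoidHom H) ∧ y ∈ K}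
    where
  toFun K := ⟨Subgroup.map (MulAut.conj c).toMonoidHom K.1, by
    obtain ⟨⟨g, hg⟩, hx⟩ := K.2
    refine ⟨⟨c * g, by rw [hg, Subgroup.map_map, conj_comp]⟩, ?_⟩
    rw [← hc]
    exact ⟨x, hx, by simp [MulAut.conj_apply]⟩⟩
  invFun K := ⟨Subgroup.map (MulAut.conj c⁻¹).toMonoidHom K.1, by
    obtain ⟨⟨g, hg⟩, hy⟩ := K.2
    refine ⟨⟨c⁻¹ * g, by rw [hg, Subgroup.map_map, conj_comp]⟩, ?_⟩
    have hx : x = c⁻¹ * y * c⁻¹⁻¹ := by rw [← hc]; group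
    rw [hx]
    exact ⟨y, hy, by simp [MulAut.conj_apply]⟩⟩
  left_inv K := by
    ext1
    simp only [Subgroup.map_map, conj_comp, inv_mul_cancel]
    convert Subgroup.map_id K.1
    ext z
    simp
  right_inv K := by
    ext1
    simp only [Subgroup.map_map, conj_comp, mul_inv_cancel]
    convert Subgroup.map_id K.1
    ext z
    simp

private noncomputable def fiberA' (H : Subgroup G) (x : G) (K : Subgroup G) (g : G)
    (hg : K = Subgroup.map (MulAut.conj g).toMonoidHom H) :
    {y : G // IsConj x y ∧ y ∈ K} ≃ {y : G // IsConj x y ∧ y ∈ H} := by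
  subst hg
  exact (fiberEquivA H x g).symm

private noncomputable def fiberA (H : Subgroup G) (x : G) (K : Subgroup G)
    (hK : ∃ g : G, K = Subgroup.map (MulAut.conj g).toMonoidHom H) :
    {y : G // IsConj x y ∧ y ∈ K} ≃ {y : G // IsConj x y ∧ y ∈ H} :=
  fiberA' H x K hK.choose hK.choose_spec

end Aux

/-- The number of `G`-conjugates of `H` containing `x`. -/
noncomputable def fHG {G : Type*} [Group G] (H : Subgroup G) (x : G) : ℕ :=
  Nat.card {K : Subgroup G //
    (∃ g : G, K = Subgroup.map (MulAut.conj g).toMonoidHom H) ∧ x ∈ K}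

/-- `|G·x ∩ H| = (|G·x| / [G : N_G(H)]) · f_H^G(x)`, stated multiplied through by the
index `[G : N_G(H)]`. -/
theorem stmt_2 {G : Type*} [Group G] [Finite G] (H : Subgroup G) (x : G) :
    Nat.card {y : G // IsConj x y ∧ y ∈ H} * (Subgroup.normalizer (H : Set G)).index
      = Nat.card {y : G // IsConj x y} * fHG H x := by
  classical
  -- the incidence type of pairs (K, y) with K a conjugate of H, y conjugate to x, y ∈ K
  let T := {p : Subgroup G × G //
    (∃ g : G, p.1 = Subgroup.map (MulAut.conj g).toMonoidHom H) ∧ (IsConj x p.2 ∧ p.2 ∈ p.1)}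
  -- fibering over the conjugate subgroup
  let eT1 : T ≃ Σ K : {K : Subgroup G //
      ∃ g : G, K = Subgroup.map (MulAut.conj g).toMonoidHom H},
      {y : G // IsConj x y ∧ y ∈ (K : Subgroup G)} :=
    { toFun := fun p => ⟨⟨p.1.1, p.2.1⟩, ⟨p.1.2, p.2.2⟩⟩
      invFun := fun s => ⟨(s.1.1, s.2.1), s.1.2, s.2.2⟩
      left_inv := fun _ => rfl
      right_inv := fun _ => rfl }
  -- fibering over the conjugate element
  let eT2 : T ≃ Σ y : {y : G // IsConj x y},
      {K : Subgroup G // (∃ g : G, K = Subgroup.map (MulAut.conj g).toMonoidHom H)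
        ∧ (y : G) ∈ K} :=
    { toFun := fun p => ⟨⟨p.1.2, p.2.2.1⟩, ⟨p.1.1, p.2.1, p.2.2.2⟩⟩
      invFun := fun s => ⟨(s.2.1, s.1.1), s.2.2.1, s.1.2, s.2.2.2⟩
      left_inv := fun _ => rfl
      right_inv := fun _ => rfl }
  -- each fiber of eT1 is equivalent to the class-intersect-H set
  have e1 : T ≃ {K : Subgroup G // ∃ g : G, K = Subgroup.map (MulAut.conj g).toMonoidHom H}
      × {y : G // IsConj x y ∧ y ∈ H} := by
    refine eT1.trans ((Equiv.sigmaCongrRight fun K => ?_).trans (Equiv.sigmaEquivProd _ _))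
    exact fiberA H x K.1 K.2
  -- each fiber of eT2 is equivalent to the set counted by fHG
  have e2 : T ≃ {y : G // IsConj x y}
      × {K : Subgroup G //
          (∃ g : G, K = Subgroup.map (MulAut.conj g).toMonoidHom H) ∧ x ∈ K} := by
    refine eT2.trans ((Equiv.sigmaCongrRight fun y => ?_).trans (Equiv.sigmaEquivProd _ _))
    exact (fiberEquivB H x (y : G) (isConj_iff.mp y.2).choose
      (isConj_iff.mp y.2).choose_spec).symm
  have h1 := Nat.card_congr e1
  have h2 := Nat.card_congr e2
  rw [Nat.card_prod] at h1 h2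
  rw [← card_conjugates H, mul_comm (Nat.card {y : G // IsConj x y ∧ y ∈ H}), ← h1, h2]
  rfl
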